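/- For lists of labels τ, σ, σ', τ' and a transitive irreflexive relation ≺, the following are equivalent: (1) |σ ++ τ'| ≼_mul |τ| + |σ| and |τ ++ σ'| ≼_mul |τ| + |σ|; (2) (|τ'| -s ds σ) ≼_mul |τ| and (|σ'| -s ds τ) ≼_mul |σ|. -/
import Mathlib


open Relation

universe u v

variable {α : Type u} {β : Type v}

/-- down-set of a set of labels -/
def ds (r : β → β → Prop) (S : Set β) : Set β := {b | ∃ a ∈ S, r b a}

/-- down-set of a multiset of labels -/
def dm (r : β → β → Prop) (M : Multiset β) : Set β := ds r {a | a ∈ M}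

/-- down-set of a list of labels -/
def dl (r : β → β → Prop) (σ : List β) : Set β := ds r {a | a ∈ σ}

/-- `M -s S`: remove from the multiset `M` all occurrences of elements of the set `S` -/
noncomputable def msub (M : Multiset β) (S : Set β) : Multiset β :=
  @Multiset.filter β (fun a => a ∉ S) (Classical.decPred _) M

/-- `M ≼_mul N` -/
def mulLe (r : β → β → Prop) (M N : Multiset β) : Prop :=
  ∃ I J K : Multiset β, M = I + K ∧ N = I + J ∧ ∀ k ∈ K, k ∈ dm r J

/-- `M ≺_mul N`: the multiset extension of `r` -/
def mulLt (r : β → β → Prop) (M N : Multiset β) : Prop :=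
  ∃ I J K : Multiset β, M = I + K ∧ N = I + J ∧ (∀ k ∈ K, k ∈ dm r J) ∧ J ≠ 0

/-- the one-step multiset extension of `r` -/
def mult1 (r : β → β → Prop) (M N : Multiset β) : Prop :=
  ∃ (a : β) (I K : Multiset β), M = I + K ∧ N = I + {a} ∧ ∀ b ∈ K, r b a

/-- the lexicographic maximum measure `|σ|` -/
noncomputable def lexmax (r : β → β → Prop) : List β → Multiset β
  | [] => 0
  | a :: σ => {a} + msub (lexmax r σ) (ds r {a})

/-- the quadruple of label lists `(τ, σ, σ', τ')` is decreasing -/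
def Decreasing (r : β → β → Prop) (τ σ σ' τ' : List β) : Prop :=
  mulLe r (lexmax r (σ ++ τ')) (lexmax r τ + lexmax r σ) ∧
  mulLe r (lexmax r (τ ++ σ')) (lexmax r τ + lexmax r σ)

/-- labeled rewrite sequences of the labeled ARS `B` -/
inductive LSeq (B : α → β → α → Prop) : α → List β → α → Prop
  | nil (a : α) : LSeq B a [] a
  | cons {a b c : α} {l : β} {σ : List β} :
      B a l b → LSeq B b σ c → LSeq B a (l :: σ) c

/-- labeled conversions of the labeled ARS `B` -/
inductive Conv (B : α → β → α → Prop) : α → List β → α → Prop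
  | nil (a : α) : Conv B a [] a
  | fwd {a b c : α} {l : β} {σ : List β} :
      B a l b → Conv B b σ c → Conv B a (l :: σ) c
  | bwd {a b c : α} {l : β} {σ : List β} :
      B b l a → Conv B b σ c → Conv B a (l :: σ) c

/-- the local peak `b ←lb a →lc c` is decreasing with respect to conversions -/
def LDConv (B : α → β → α → Prop) (r : β → β → Prop) (b c : α) (lb lc : β) : Prop :=
  ∃ (d b1 b2 c1 c2 : α) (σ1 σ3 τ1 τ3 : List β),
    Conv B b σ1 b1 ∧ (∀ l ∈ σ1, l ∈ ds r ({lc} : Set β)) ∧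
    (b1 = b2 ∨ B b1 lb b2) ∧
    Conv B b2 σ3 d ∧ (∀ l ∈ σ3, l ∈ ds r ({lc, lb} : Set β)) ∧
    Conv B c τ1 c1 ∧ (∀ l ∈ τ1, l ∈ ds r ({lb} : Set β)) ∧
    (c1 = c2 ∨ B c1 lc c2) ∧
    Conv B c2 τ3 d ∧ (∀ l ∈ τ3, l ∈ ds r ({lc, lb} : Set β))

/-- confluence of an abstract rewrite system -/
def Confluent (A : α → α → Prop) : Prop :=
  ∀ a b c : α, ReflTransGen A a b → ReflTransGen A a c →
    ∃ d, ReflTransGen A b d ∧ ReflTransGen A c d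

section Aux

variable {β : Type v} {r : β → β → Prop}

lemma msub_add (M N : Multiset β) (S : Set β) : msub (M + N) S = msub M S + msub N S := by
  simp [msub, Multiset.filter_add]

lemma msub_msub (M : Multiset β) (S T : Set β) : msub (msub M S) T = msub M (T ∪ S) := by
  classical
  ext x
  simp only [msub, Multiset.filter_filter, Multiset.count_filter, Set.mem_union]
  by_cases h1 : x ∈ S <;> by_cases h2 : x ∈ T <;> simp [h1, h2]

lemma dl_nil : dl r ([] : List β) = ∅ := by
  ext b; simp [dl, ds]

lemma msub_empty (M : Multiset β) : msub M (∅ : Set β) = M := by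
  simp only [msub, Set.mem_empty_iff_false, not_false_eq_true]
  exact Multiset.filter_eq_self.mpr fun _ _ => trivial

lemma dl_cons (a : β) (σ : List β) : dl r (a :: σ) = ds r {a} ∪ dl r σ := by
  ext b
  simp only [dl, ds, Set.mem_setOf_eq, List.mem_cons, Set.mem_union, Set.mem_singleton_iff]
  constructor
  · rintro ⟨c, (rfl | hc), hrc⟩
    · exact Or.inl ⟨c, rfl, hrc⟩
    · exact Or.inr ⟨c, hc, hrc⟩
  · rintro (⟨c, rfl, hrc⟩ | ⟨c, hc, hrc⟩)
    · exact ⟨c, Or.inl rfl, hrc⟩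
    · exact ⟨c, Or.inr hc, hrc⟩

lemma lexmax_append (r : β → β → Prop) (σ τ : List β) :
    lexmax r (σ ++ τ) = lexmax r σ + msub (lexmax r τ) (dl r σ) := by
  induction σ with
  | nil => simp [lexmax, dl_nil, msub_empty]
  | cons a σ ih =>
    simp only [List.cons_append, List.append_eq, lexmax, ih, msub_add, msub_msub, dl_cons,
      add_assoc]

lemma mulLe_canon_aux (htrans : Transitive r) (hirr : Irreflexive r) :
    ∀ (n : ℕ) (I J K : Multiset β), Multiset.card K = n → (∀ k ∈ K, k ∈ dm r J) →
    ∃ I' J' K', I + K = I' + K' ∧ I + J = I' + J' ∧ (∀ k ∈ K', k ∈ dm r J') ∧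
      ∀ a ∈ K', a ∉ J' := by
  intro n
  induction n using Nat.strong_induction_on with
  | _ n ih =>
    intro I J K hcard hK
    by_cases hdisj : ∀ a ∈ K, a ∉ J
    · exact ⟨I, J, K, rfl, rfl, hK, hdisj⟩
    · push_neg at hdisj
      obtain ⟨a, haK, haJ⟩ := hdisj
      classical
      have hK' : ∀ k ∈ K.erase a, k ∈ dm r (J.erase a) := by
        intro k hk
        obtain ⟨j, hjJ, hkj⟩ := hK k (Multiset.mem_of_mem_erase hk)
        by_cases hja : j = a
        · rw [hja] at hkj
          obtain ⟨j', hj'J, haj'⟩ := hK a haK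
          have hne : j' ≠ a := fun h => hirr a (h ▸ haj')
          exact ⟨j', (Multiset.mem_erase_of_ne hne).mpr hj'J, htrans hkj haj'⟩
        · exact ⟨j, (Multiset.mem_erase_of_ne hja).mpr hjJ, hkj⟩
      have hpos : 0 < n := by
        rw [← hcard]; exact Multiset.card_pos.mpr fun h => by simp [h] at haK
      have hcard' : Multiset.card (K.erase a) = n - 1 := by
        rw [Multiset.card_erase_of_mem haK, hcard]; rfl
      obtain ⟨I', J', K', h1, h2, h3, h4⟩ :=
        ih (n - 1) (by omega) (I + {a}) (J.erase a) (K.erase a) hcard' hK'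
      refine ⟨I', J', K', ?_, ?_, h3, h4⟩
      · rw [← h1, add_assoc]
        congr 1
        rw [Multiset.singleton_add, Multiset.cons_erase haK]
      · rw [← h2, add_assoc]
        congr 1
        rw [Multiset.singleton_add, Multiset.cons_erase haJ]

lemma mulLe_cancel (htrans : Transitive r) (hirr : Irreflexive r) {Z X Y : Multiset β}
    (h : mulLe r (Z + X) (Z + Y)) : mulLe r X Y := by
  classical
  obtain ⟨I, J, K, hM, hN, hK⟩ := h
  obtain ⟨I', J', K', h1, h2, h3, h4⟩ :=
    mulLe_canon_aux htrans hirr (Multiset.card K) I J K rfl hK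
  rw [← hM] at h1; rw [← hN] at h2
  have hKJ : K' - J' = K' := by
    ext x
    rw [Multiset.count_sub]
    by_cases hx : x ∈ K'
    · rw [Multiset.count_eq_zero_of_notMem (h4 x hx)]; omega
    · rw [Multiset.count_eq_zero_of_notMem hx]; omega
  have hJK : J' - K' = J' := by
    ext x
    rw [Multiset.count_sub]
    by_cases hx : x ∈ J'
    · have : x ∉ K' := fun hxK => h4 x hxK hx
      rw [Multiset.count_eq_zero_of_notMem this]; omega
    · rw [Multiset.count_eq_zero_of_notMem hx]; omega
  have hKeq : K' = X - Y := by
    have h5 : X - Y = K' - J' := by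
      rw [← add_tsub_add_eq_tsub_left Z X Y, h1, h2, add_tsub_add_eq_tsub_left]
    rw [h5, hKJ]
  have hJeq : J' = Y - X := by
    have h5 : Y - X = J' - K' := by
      rw [← add_tsub_add_eq_tsub_left Z Y X, h1, h2, add_tsub_add_eq_tsub_left]
    rw [h5, hJK]
  refine ⟨X ∩ Y, J', K', ?_, ?_, h3⟩
  · rw [hKeq, add_comm, Multiset.sub_add_inter]
  · rw [hJeq, Multiset.inter_comm, add_comm, Multiset.sub_add_inter]

lemma mulLe_add_left {Z X Y : Multiset β} (h : mulLe r X Y) : mulLe r (Z + X) (Z + Y) := by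
  obtain ⟨I, J, K, h1, h2, h3⟩ := h
  exact ⟨Z + I, J, K, by rw [h1, add_assoc], by rw [h2, add_assoc], h3⟩

end Aux

/-- the two formulations of decreasingness are equivalent -/
theorem decreasing_iff {β : Type v} (r : β → β → Prop)
    (htrans : Transitive r) (hirrefl : Irreflexive r) (τ σ σ' τ' : List β) :
    (mulLe r (lexmax r (σ ++ τ')) (lexmax r τ + lexmax r σ) ∧
     mulLe r (lexmax r (τ ++ σ')) (lexmax r τ + lexmax r σ)) ↔
    (mulLe r (msub (lexmax r τ') (dl r σ)) (lexmax r τ) ∧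
     mulLe r (msub (lexmax r σ') (dl r τ)) (lexmax r σ)) := by
  rw [lexmax_append r σ τ', lexmax_append r τ σ',
    add_comm (lexmax r τ) (lexmax r σ)]
  constructor
  · rintro ⟨h1, h2⟩
    exact ⟨mulLe_cancel htrans hirrefl h1,
      mulLe_cancel htrans hirrefl (by rwa [add_comm (lexmax r σ)] at h2)⟩
  · rintro ⟨h1, h2⟩
    exact ⟨mulLe_add_left h1, by rw [add_comm (lexmax r σ)]; exact mulLe_add_left h2⟩
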